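/- Let p be a prime, a an integer coprime to p, and b an integer with a·b ≡ 1 (mod p). Define V_0 = b and, for n ≥ 1, V_n = b·(2 - a·b)·∏_{i=1}^{n-1} (1 + (a·b - 1)^{2^i}). Then for every natural number n, a·V_n ≡ 1 (mod p^{2^n}), i.e., V_n is an inverse of a modulo p^{2^n}. -/
import Mathlib

lemma telescope_prod (x : ℤ) : ∀ n : ℕ,
    (1 - x ^ 2) * ∏ i ∈ Finset.Icc 1 n, (1 + x ^ (2 ^ i)) = 1 - x ^ (2 ^ (n + 1)) := by
  intro n
  induction n with
  | zero => simp
  | succ m ih =>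
      rw [Finset.prod_Icc_succ_top (by omega : 1 ≤ m + 1), ← mul_assoc, ih]
      ring_nf

theorem explicit_formula_prime_power (p : ℕ) (hp : p.Prime) (a b : ℤ)
    (ha : IsCoprime a (p : ℤ)) (hb : a * b ≡ 1 [ZMOD (p : ℤ)])
    (V : ℕ → ℤ) (hV0 : V 0 = b)
    (hV : ∀ n : ℕ, 1 ≤ n →
      V n = b * (2 - a * b) * ∏ i ∈ Finset.Icc 1 (n - 1), (1 + (a * b - 1) ^ (2 ^ i))) :
    ∀ n : ℕ, a * V n ≡ 1 [ZMOD (p : ℤ) ^ (2 ^ n)] := by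
  have hpd : (p : ℤ) ∣ a * b - 1 := (Int.ModEq.dvd hb.symm)
  intro n
  cases n with
  | zero => simpa [hV0] using hb
  | succ m =>
      have hVeq := hV (m + 1) (by omega)
      simp only [Nat.add_sub_cancel] at hVeq
      have key : a * V (m + 1) = 1 - (a * b - 1) ^ (2 ^ (m + 1)) := by
        rw [hVeq, ← telescope_prod (a * b - 1) m]
        ring
      have hdvd : (p : ℤ) ^ (2 ^ (m + 1)) ∣ (a * b - 1) ^ (2 ^ (m + 1)) :=
        pow_dvd_pow_of_dvd hpd _
      rw [key]
      have : (1 : ℤ) - (1 - (a * b - 1) ^ (2 ^ (m + 1))) = (a * b - 1) ^ (2 ^ (m + 1)) := by ring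
      exact (Int.modEq_iff_dvd.mpr (by rw [this]; exact hdvd))
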